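/- arXiv:2505.09412 — 2 statements merged into one kernel-verified Lean document; each statement's English description precedes it below -/
import Mathlib

section
/- Let P be the 5×5 real symmetric matrix indexed by Fin 5 with entries P(0,1) = P(1,0) = 19/40, P(1,2) = P(2,1) = 1/40, P(3,4) = P(4,3) = 1/2, and all other entries 0. Then the function f : ℝ⁵ → ℝ defined by f(x) = xᵀ P x is not convex on ℝ⁵. -/
open Matrix

/-! A convex even function is minimised at the origin, so a convex quadratic form is nonnegative.
The form of `Pmat` is negative at `(1, -1, 0, 0, 0)`, where only the entry `19/40` contributes. -/

noncomputable def Pmat : Matrix (Fin 5) (Fin 5) ℝ :=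
  !![0, 19/40, 0, 0, 0;
     19/40, 0, 1/40, 0, 0;
     0, 1/40, 0, 0, 0;
     0, 0, 0, 0, 1/2;
     0, 0, 0, 1/2, 0]

section

variable {𝕜 E : Type*} [Field 𝕜] [LinearOrder 𝕜] [IsStrictOrderedRing 𝕜]
  [AddCommGroup E] [Module 𝕜 E]

theorem ConvexOn.apply_zero_le_of_even {f : E → 𝕜} (hf : ConvexOn 𝕜 Set.univ f)
    (heven : ∀ x, f (-x) = f x) (x : E) : f 0 ≤ f x := by
  have half_nonneg : (0 : 𝕜) ≤ 1 / 2 := by positivity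
  have hmid := hf.2 (Set.mem_univ x) (Set.mem_univ (-x)) half_nonneg half_nonneg
    (add_halves 1)
  rwa [smul_neg, add_neg_cancel, heven, smul_eq_mul, ← add_mul, add_halves, one_mul] at hmid

theorem dotProduct_mulVec_self_nonneg_of_convexOn {n : Type*} [Fintype n] {A : Matrix n n 𝕜}
    (hA : ConvexOn 𝕜 Set.univ (fun x => x ⬝ᵥ A *ᵥ x)) (x : n → 𝕜) : 0 ≤ x ⬝ᵥ A *ᵥ x := by
  simpa using hA.apply_zero_le_of_even (fun y => by simp [mulVec_neg]) x

end

theorem Pmat_quadratic_form_witness :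
    ![1, -1, 0, 0, 0] ⬝ᵥ Pmat *ᵥ ![1, -1, 0, 0, 0] = -19 / 20 := by
  simp [Pmat, mulVec, dotProduct, Fin.sum_univ_five]
  norm_num

theorem quadratic_form_Pmat_not_convex :
    ¬ ConvexOn ℝ (Set.univ : Set (Fin 5 → ℝ)) (fun x => x ⬝ᵥ Pmat.mulVec x) := by
  intro hconvex
  have hnonneg := dotProduct_mulVec_self_nonneg_of_convexOn hconvex ![1, -1, 0, 0, 0]
  linarith [Pmat_quadratic_form_witness]
end

section
/- For all real numbers z, x, y, w with 0 ≤ z ≤ 1/2, 0 ≤ y ≤ 1/2, 0 ≤ x ≤ 1, |x − 1/5| ≤ 1/2, 0 ≤ w ≤ 1, and |w − 3/10| ≤ 1/2, setting r = 1 − (4/5)·w, c = (1 − y) + (y/10)·r, and e = (1 − x) + x·c, the following strict inequality holds: (1 − z)·((19/40)·r + (1/20)·e) + z·c > 1/5. -/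
theorem no_eps_counterfactual_under_dinfty
    (z x y w r c e : ℝ)
    (hz : 0 ≤ z ∧ z ≤ 1/2) (hy : 0 ≤ y ∧ y ≤ 1/2)
    (hx : 0 ≤ x ∧ x ≤ 1) (hxd : |x - 1/5| ≤ 1/2)
    (hw : 0 ≤ w ∧ w ≤ 1) (hwd : |w - 3/10| ≤ 1/2)
    (hr : r = 1 - (4/5) * w)
    (hc : c = (1 - y) + (y/10) * r)
    (he : e = (1 - x) + x * c) :
    (1 - z) * ((19/40) * r + (1/20) * e) + z * c > 1/5 := by
  obtain ⟨hz0, hz1⟩ := hz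
  obtain ⟨hy0, hy1⟩ := hy
  obtain ⟨hx0, hx1⟩ := hx
  obtain ⟨hw0, hw1⟩ := hw
  rw [abs_le] at hxd hwd
  obtain ⟨hxa, hxb⟩ := hxd
  obtain ⟨hwa, hwb⟩ := hwd
  subst hr hc he
  nlinarith [mul_nonneg hy0 hw0, mul_nonneg hz0 hy0, mul_nonneg hx0 hy0,
    mul_nonneg (mul_nonneg hz0 hy0) hw0, mul_nonneg (mul_nonneg hx0 hy0) hw0,
    mul_nonneg hz0 hx0, mul_nonneg (mul_nonneg hz0 hx0) hy0,
    mul_nonneg (mul_nonneg (mul_nonneg hz0 hx0) hy0) hw0,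
    sq_nonneg (w - 4/5), sq_nonneg y, mul_nonneg hz0 hw0]
end
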